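/- Let Γ be a countable group acting on a countable set I such that every orbit Γ·i is infinite, let X₀ be a standard Borel space and μ₀ a probability measure on X₀, and let μ = μ₀^{⊗I} be the product probability measure on X₀^I. Then the generalized Bernoulli action is weakly mixing in the following sense: every finite-dimensional subspace V of L²(X₀^I, μ) that is invariant under all Koopman operators f ↦ f ∘ T_g (g ∈ Γ) consists of functions that are constant μ-almost everywhere. -/

import Mathlib

open MeasureTheory ProbabilityTheory Filter Set Topology
open scoped InnerProductSpace Pointwise ENNReal ComplexConjugate

/-!
The Koopman operators `K g` of the shift are mixing along a suitable filter on `Γ`: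
`⟪v, K g u⟫ → ⟪v, 1⟫ ⟪1, u⟫`. For functions of finitely many coordinates this is an
exact identity as soon as `g⁻¹` moves the coordinates of `u` off those of `v`, because
disjoint sets of coordinates are independent; and such `g` exist for every pair of finite
sets by B. H. Neumann's lemma, since all orbits are infinite. Finitary functions are dense
in `L²`, so mixing holds everywhere. Finally, if `w` lies in a finite-dimensional invariant
subspace and has mean zero, then for an orthonormal basis `(e k)` of that subspace
`‖w‖² = ∑ k, ‖⟪e k, K g w⟫‖² → 0`, so `w = 0`.
-/

section Hilbert

variable {𝕜 H α : Type*} [RCLike 𝕜] [NormedAddCommGroup H] [InnerProductSpace 𝕜 H]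
  {l : Filter α}

theorem eq_zero_of_tendsto_inner_of_mem [l.NeBot] (T : α → H →ₗᵢ[𝕜] H)
    {W : Submodule 𝕜 H} [FiniteDimensional 𝕜 W] (hW : ∀ a, ∀ w ∈ W, T a w ∈ W)
    {w : H} (hw : w ∈ W) (hmix : ∀ v ∈ W, Tendsto (fun a => ⟪v, T a w⟫_𝕜) l (𝓝 0)) :
    w = 0 := by
  let b := stdOrthonormalBasis 𝕜 W
  have hparseval : ∀ a, ∑ k, ‖⟪(b k : H), T a w⟫_𝕜‖ ^ 2 = ‖w‖ ^ 2 := fun a => by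
    simpa [(T a).norm_map] using b.sum_sq_norm_inner_right ⟨T a w, hW a w hw⟩
  have hlim : Tendsto (fun a => ∑ k, ‖⟪(b k : H), T a w⟫_𝕜‖ ^ 2) l (𝓝 0) := by
    simpa using tendsto_finsetSum Finset.univ fun k _ =>
      ((hmix (b k) (b k).2).norm.pow 2)
  simp only [hparseval] at hlim
  simpa using tendsto_nhds_unique tendsto_const_nhds hlim

theorem le_span_singleton_of_tendsto_inner [l.NeBot] (T : α → H →ₗᵢ[𝕜] H) {e : H}
    (he : ‖e‖ = 1) (hTe : ∀ a, T a e = e)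
    (hmix : ∀ u v, Tendsto (fun a => ⟪v, T a u⟫_𝕜) l (𝓝 (⟪v, e⟫_𝕜 * ⟪e, u⟫_𝕜)))
    {V : Submodule 𝕜 H} [FiniteDimensional 𝕜 V] (hV : ∀ a, ∀ v ∈ V, T a v ∈ V) :
    V ≤ 𝕜 ∙ e := by
  let W := V ⊔ 𝕜 ∙ e
  have hW : ∀ a, ∀ w ∈ W, T a w ∈ W := fun a w hw => by
    obtain ⟨v, hv, c, hc, rfl⟩ := Submodule.mem_sup.mp hw
    obtain ⟨c, rfl⟩ := Submodule.mem_span_singleton.mp hc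
    rw [map_add, map_smul, hTe]
    exact Submodule.add_mem_sup (hV a v hv)
      (Submodule.smul_mem _ c (Submodule.mem_span_singleton_self e))
  intro v hv
  have hproj : v - ⟪e, v⟫_𝕜 • e = 0 := by
    refine eq_zero_of_tendsto_inner_of_mem (l := l) T hW
      (Submodule.sub_mem _ (Submodule.mem_sup_left hv)
        (Submodule.mem_sup_right (Submodule.smul_mem _ _ (Submodule.mem_span_singleton_self e))))
      fun u _ => ?_
    simpa [inner_sub_right, inner_smul_right, he] using hmix (v - ⟪e, v⟫_𝕜 • e) u
  rw [sub_eq_zero.mp hproj]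
  exact Submodule.smul_mem _ _ (Submodule.mem_span_singleton_self e)

theorem isClosed_setOf_tendsto_inner_left (T : α → H →ₗᵢ[𝕜] H) (u : H) {f : H → 𝕜}
    (hf : Continuous f) : IsClosed {v | Tendsto (fun a => ⟪v, T a u⟫_𝕜) l (𝓝 (f v))} := by
  refine Equicontinuous.isClosed_setOfPred_tendsto (F := fun a v => ⟪v, T a u⟫_𝕜) ?_ hf
  refine (LipschitzWith.uniformEquicontinuous _ ‖u‖₊ fun a =>
    LipschitzWith.of_dist_le_mul fun v v' => ?_).equicontinuous
  rw [dist_eq_norm, dist_eq_norm, ← inner_sub_left, mul_comm]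
  simpa [(T a).norm_map] using norm_inner_le_norm (𝕜 := 𝕜) (v - v') (T a u)

theorem isClosed_setOf_tendsto_inner_right (T : α → H →ₗᵢ[𝕜] H) (v : H) {f : H → 𝕜}
    (hf : Continuous f) : IsClosed {u | Tendsto (fun a => ⟪v, T a u⟫_𝕜) l (𝓝 (f u))} := by
  refine Equicontinuous.isClosed_setOfPred_tendsto (F := fun a u => ⟪v, T a u⟫_𝕜) ?_ hf
  refine (LipschitzWith.uniformEquicontinuous _ ‖v‖₊ fun a =>
    LipschitzWith.of_dist_le_mul fun u u' => ?_).equicontinuous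
  rw [dist_eq_norm, dist_eq_norm, ← inner_sub_right, ← map_sub, ← (T a).norm_map (u - u')]
  exact norm_inner_le_norm v _

theorem tendsto_inner_of_dense (T : α → H →ₗᵢ[𝕜] H) (e : H) {D : Set H} (hD : Dense D)
    (hmix : ∀ u ∈ D, ∀ v ∈ D, Tendsto (fun a => ⟪v, T a u⟫_𝕜) l (𝓝 (⟪v, e⟫_𝕜 * ⟪e, u⟫_𝕜)))
    (u v : H) : Tendsto (fun a => ⟪v, T a u⟫_𝕜) l (𝓝 (⟪v, e⟫_𝕜 * ⟪e, u⟫_𝕜)) := by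
  have hD_left : ∀ u ∈ D, ∀ v, Tendsto (fun a => ⟪v, T a u⟫_𝕜) l (𝓝 (⟪v, e⟫_𝕜 * ⟪e, u⟫_𝕜)) :=
    fun u hu v => (isClosed_setOf_tendsto_inner_left T u (by fun_prop)).closure_subset_iff.mpr
      (hmix u hu) (hD v)
  exact (isClosed_setOf_tendsto_inner_right T v (by fun_prop)).closure_subset_iff.mpr
    (fun u hu => hD_left u hu v) (hD u)

end Hilbert

section Neumann

variable {Γ I : Type*} [Group Γ] [MulAction Γ I]

theorem MulAction.exists_disjoint_smul_finset (horb : ∀ i : I, (MulAction.orbit Γ i).Infinite)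
    (F : Finset I) : ∃ g : Γ, Disjoint (g • (F : Set I)) F := by
  classical
  by_contra! hmeet
  -- Then `Γ` is covered by the sets `{γ | γ • i = j}` with `i j ∈ F`, each of them empty or a
  -- left coset of the stabilizer of `i`; by B. H. Neumann's lemma one of these stabilizers has
  -- finite index, i.e. one orbit is finite.
  let g : I × I → Γ := fun p => if h : ∃ γ : Γ, γ • p.1 = p.2 then h.choose else 1
  have hcover : ⋃ p ∈ F ×ˢ F, g p • (MulAction.stabilizer Γ p.1 : Set Γ) = univ := by
    refine eq_univ_of_forall fun γ => ?_
    obtain ⟨_, ⟨i, hi, rfl⟩, hγi⟩ := not_disjoint_iff.mp (hmeet γ)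
    have hex : ∃ δ : Γ, δ • i = γ • i := ⟨γ, rfl⟩
    have hg : g (i, γ • i) • i = γ • i := by simpa [g, hex] using hex.choose_spec
    refine mem_biUnion (x := (i, γ • i)) (Finset.mem_product.mpr ⟨hi, hγi⟩)
      (mem_leftCoset_iff _ |>.mpr ?_)
    rw [SetLike.mem_coe, MulAction.mem_stabilizer_iff, mul_smul, inv_smul_eq_iff]
    exact hg.symm
  obtain ⟨p, -, hp⟩ := Subgroup.exists_finiteIndex_of_leftCoset_cover hcover
  apply horb p.1
  refine Set.finite_of_ncard_ne_zero ?_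
  rw [← MulAction.index_stabilizer]
  exact hp.index_ne_zero

theorem MulAction.exists_neBot_eventually_disjoint_smul
    (horb : ∀ i : I, (MulAction.orbit Γ i).Infinite) :
    ∃ l : Filter Γ, l.NeBot ∧ ∀ s t : Finset I, ∀ᶠ g in l, Disjoint (g⁻¹ • (s : Set I)) t := by
  classical
  refine ⟨⨅ F : Finset I, 𝓟 {g : Γ | Disjoint (g⁻¹ • (F : Set I)) F}, ?_, fun s t => ?_⟩
  · refine iInf_neBot_of_directed' ?_ fun F => principal_neBot_iff.mpr ?_
    · refine directed_of_isDirected_le fun F F' hF => principal_mono.mpr fun g hg => ?_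
      exact hg.mono (smul_set_mono (Finset.coe_subset.mpr hF)) (Finset.coe_subset.mpr hF)
    · obtain ⟨g, hg⟩ := exists_disjoint_smul_finset horb F
      exact ⟨g⁻¹, by simpa using hg⟩
  · refine mem_iInf_of_mem (s ∪ t) fun g hg => ?_
    rw [mem_ofPred_eq, Finset.coe_union] at hg
    exact hg.mono (smul_set_mono subset_union_left) subset_union_right

end Neumann

section ProductMeasure

variable {ι : Type*} {X : ι → Type*} [∀ i, MeasurableSpace (X i)]

theorem indep_cylinderEvents_infinitePi (P : ∀ i, Measure (X i))
    [∀ i, IsProbabilityMeasure (P i)] {S T : Set ι} (hST : Disjoint S T) :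
    Indep (cylinderEvents S) (cylinderEvents T) (Measure.infinitePi P) :=
  indep_iSup_of_disjoint (fun i => (measurable_pi_apply i).comap_le)
    ((iIndepFun_iff_iIndep _ _ _).mp
      (iIndepFun_infinitePi (X := fun _ => id) fun _ => measurable_id)) hST

theorem integral_mul_eq_mul_integral_of_cylinderEvents {𝕜 : Type*} [RCLike 𝕜]
    (P : ∀ i, Measure (X i)) [∀ i, IsProbabilityMeasure (P i)]
    {S T : Set ι} (hST : Disjoint S T) {f g : (Π i, X i) → 𝕜}
    (hf : StronglyMeasurable[cylinderEvents S] f) (hg : StronglyMeasurable[cylinderEvents T] g) :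
    ∫ x, f x * g x ∂Measure.infinitePi P =
      (∫ x, f x ∂Measure.infinitePi P) * ∫ x, g x ∂Measure.infinitePi P := by
  have hfg : IndepFun f g (Measure.infinitePi P) := by
    rw [IndepFun_iff_Indep]
    exact indep_of_indep_of_le_left (indep_of_indep_of_le_right
      (indep_cylinderEvents_infinitePi P hST) hg.measurable.comap_le) hf.measurable.comap_le
  exact hfg.integral_fun_mul_eq_mul_integral (hf.mono cylinderEvents_le_pi).aestronglyMeasurable
    (hg.mono cylinderEvents_le_pi).aestronglyMeasurable

theorem measurableSet_cylinder_cylinderEvents {s : Finset ι} {S : Set (Π i : s, X i)}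
    (hS : MeasurableSet S) : MeasurableSet[cylinderEvents (s : Set ι)] (cylinder s S) :=
  measurable_restrict_cylinderEvents _ hS

theorem Lp.dense_setOf_aestronglyMeasurable_cylinderEvents {E : Type*} [NormedAddCommGroup E]
    {p : ℝ≥0∞} [Fact (1 ≤ p)] (hp : p ≠ ∞) (μ : Measure (Π i, X i)) [IsFiniteMeasure μ] :
    Dense {f : Lp E p μ |
      ∃ s : Finset ι, AEStronglyMeasurable[cylinderEvents (s : Set ι)] f μ} := by
  classical
  let P : ((Π i, X i) → E) → Prop := fun g =>
    (∃ s : Finset ι, StronglyMeasurable[cylinderEvents (s : Set ι)] g) ∧ MemLp g p μ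
  have hind : ∀ (c : E) ⦃t : Set (Π i, X i)⦄, MeasurableSet t → μ t < ∞ → ∀ {ε : ℝ≥0∞}, ε ≠ 0 →
      ∃ g, eLpNorm (g - t.indicator fun _ => c) p μ ≤ ε ∧ P g := by
    intro c t ht _ ε hε
    obtain ⟨η, hη, hηt⟩ := exists_eLpNorm_indicator_le hp c hε
    obtain ⟨u, hu, hut⟩ := exists_measure_symmDiff_lt_of_generateFrom_isSetRing (μ := μ)
      isSetRing_measurableCylinders
      ⟨{univ}, countable_singleton _, by simpa using univ_mem_measurableCylinders X, by simp⟩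
      generateFrom_measurableCylinders.symm ht (ENNReal.coe_pos.mpr hη)
    obtain ⟨s, S, hS, rfl⟩ := (mem_measurableCylinders u).mp hu
    refine ⟨(cylinder s S).indicator fun _ => c, ?_, ⟨s, ?_⟩, ?_⟩
    · rw [eLpNorm_indicator_sub_indicator]
      exact hηt _ hut.le
    · exact stronglyMeasurable_const.indicator (measurableSet_cylinder_cylinderEvents hS)
    · exact memLp_indicator_const p hS.cylinder c (Or.inr (measure_ne_top μ _))
  have hadd : ∀ f g, P f → P g → P (f + g) := by
    rintro f g ⟨⟨s, hf⟩, hf'⟩ ⟨⟨t, hg⟩, hg'⟩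
    refine ⟨⟨s ∪ t, ?_⟩, hf'.add hg'⟩
    exact (hf.mono (cylinderEvents_mono (by simp))).add (hg.mono (cylinderEvents_mono (by simp)))
  have hmeas : ∀ f, P f → AEStronglyMeasurable f μ :=
    fun f ⟨⟨_, hf⟩, _⟩ => (hf.mono cylinderEvents_le_pi).aestronglyMeasurable
  refine EMetric.dense_iff.mpr fun f r hr => ?_
  obtain ⟨δ, hδ, hδr⟩ := exists_between hr
  obtain ⟨g, hfg, ⟨s, hgs⟩, hg⟩ := (Lp.memLp f).induction_dense hp P hind hadd hmeas hδ.ne'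
  refine ⟨hg.toLp g, ?_, s, g, hgs, hg.coeFn_toLp⟩
  rw [Metric.mem_eball, ← Lp.toLp_coeFn f (Lp.memLp f), Lp.edist_toLp_toLp, eLpNorm_sub_comm]
  exact hfg.trans_lt hδr

end ProductMeasure

theorem L2.inner_const_one_left {α : Type*} [MeasurableSpace α] {μ : Measure α}
    [IsFiniteMeasure μ] (u : Lp ℂ 2 μ) : ⟪Lp.const 2 μ (1 : ℂ), u⟫_ℂ = ∫ x, u x ∂μ := by
  rw [← indicatorConstLp_univ, L2.inner_indicatorConstLp_one, Measure.restrict_univ]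

section Bernoulli

variable {Γ I X₀ : Type*} [Group Γ] [MulAction Γ I] [MeasurableSpace X₀]
  (μ₀ : Measure X₀) [IsProbabilityMeasure μ₀]

local notation "μ⊗" => Measure.infinitePi fun _ : I => μ₀

def bernoulliShift (g : Γ) : (I → X₀) ≃ᵐ (I → X₀) :=
  MeasurableEquiv.piCongrLeft (fun _ => X₀) (MulAction.toPerm g)

theorem bernoulliShift_apply (g : Γ) (x : I → X₀) (i : I) :
    bernoulliShift g x i = x (g⁻¹ • i) := by
  simpa [bernoulliShift] using MeasurableEquiv.piCongrLeft_apply_apply (β := fun _ : I => X₀)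
    (MulAction.toPerm g) x (g⁻¹ • i)

theorem measurePreserving_bernoulliShift (g : Γ) :
    MeasurePreserving (bernoulliShift g) μ⊗ μ⊗ :=
  ⟨MeasurableEquiv.measurable _, Measure.infinitePi_map_piCongrLeft (fun _ : I => μ₀) _⟩

theorem measurable_bernoulliShift_cylinderEvents (g : Γ) (S : Set I) :
    Measurable[cylinderEvents (g⁻¹ • S), cylinderEvents S] (bernoulliShift (X₀ := X₀) g) :=
  measurable_cylinderEvents_iff.mpr fun i hi => by
    simpa only [bernoulliShift_apply] using measurable_cylinderEvent_apply (smul_mem_smul_set hi)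

noncomputable def bernoulliKoopman (g : Γ) : Lp ℂ 2 μ⊗ →ₗᵢ[ℂ] Lp ℂ 2 μ⊗ :=
  Lp.compMeasurePreservingₗᵢ ℂ (bernoulliShift g) (measurePreserving_bernoulliShift μ₀ g)

theorem coeFn_bernoulliKoopman (g : Γ) (u : Lp ℂ 2 μ⊗) :
    bernoulliKoopman μ₀ g u =ᵐ[μ⊗] u ∘ bernoulliShift g :=
  Lp.coeFn_compMeasurePreserving _ _

theorem bernoulliKoopman_const (g : Γ) (c : ℂ) :
    bernoulliKoopman μ₀ g (Lp.const 2 _ c) = Lp.const 2 μ⊗ c := by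
  refine Lp.ext ((coeFn_bernoulliKoopman μ₀ g _).trans ?_)
  filter_upwards [(measurePreserving_bernoulliShift μ₀ g).quasiMeasurePreserving.ae_eq_comp
    (Lp.coeFn_const 2 μ⊗ c), Lp.coeFn_const 2 μ⊗ c] with x hx hx'
  rw [hx, hx']
  rfl

theorem inner_bernoulliKoopman_of_disjoint {g : Γ} {S T : Set I} (hST : Disjoint (g⁻¹ • S) T)
    {u v : Lp ℂ 2 μ⊗} (hu : AEStronglyMeasurable[cylinderEvents S] u μ⊗)
    (hv : AEStronglyMeasurable[cylinderEvents T] v μ⊗) :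
    ⟪v, bernoulliKoopman μ₀ g u⟫_ℂ = ⟪v, Lp.const 2 _ 1⟫_ℂ * ⟪Lp.const 2 _ 1, u⟫_ℂ := by
  obtain ⟨u₀, hu₀, hu⟩ := hu
  obtain ⟨v₀, hv₀, hv⟩ := hv
  have hT := measurePreserving_bernoulliShift (I := I) μ₀ g
  have hKu : bernoulliKoopman μ₀ g u =ᵐ[μ⊗] u₀ ∘ bernoulliShift g :=
    (coeFn_bernoulliKoopman μ₀ g u).trans (hT.quasiMeasurePreserving.ae_eq_comp hu)
  calc ⟪v, bernoulliKoopman μ₀ g u⟫_ℂ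
      = ∫ x, conj (v₀ x) * u₀ (bernoulliShift g x) ∂μ⊗ := by
        rw [L2.inner_def]
        refine integral_congr_ae ?_
        filter_upwards [hKu, hv] with x hxu hxv
        simp [hxu, hxv, mul_comm]
    _ = (∫ x, conj (v₀ x) ∂μ⊗) * ∫ x, u₀ (bernoulliShift g x) ∂μ⊗ :=
        integral_mul_eq_mul_integral_of_cylinderEvents _ hST.symm
          (RCLike.continuous_conj.comp_stronglyMeasurable hv₀)
          (hu₀.comp_measurable (measurable_bernoulliShift_cylinderEvents g S))
    _ = ⟪v, Lp.const 2 _ 1⟫_ℂ * ⟪Lp.const 2 _ 1, u⟫_ℂ := by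
        rw [← inner_conj_symm, L2.inner_const_one_left, L2.inner_const_one_left, integral_conj,
          hT.integral_comp', integral_congr_ae hu, integral_congr_ae hv]

theorem tendsto_inner_bernoulliKoopman {l : Filter Γ}
    (hl : ∀ s t : Finset I, ∀ᶠ g in l, Disjoint (g⁻¹ • (s : Set I)) t) (u v : Lp ℂ 2 μ⊗) :
    Tendsto (fun g => ⟪v, bernoulliKoopman μ₀ g u⟫_ℂ) l
      (𝓝 (⟪v, Lp.const 2 _ 1⟫_ℂ * ⟪Lp.const 2 _ 1, u⟫_ℂ)) := by
  refine tendsto_inner_of_dense _ _ (Lp.dense_setOf_aestronglyMeasurable_cylinderEvents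
    (p := 2) ENNReal.ofNat_ne_top _) (fun u ⟨s, hu⟩ v ⟨t, hv⟩ => ?_) u v
  exact tendsto_const_nhds.congr' ((hl s t).mono fun g hg =>
    (inner_bernoulliKoopman_of_disjoint μ₀ hg hu hv).symm)

end Bernoulli

theorem stmt4_general {Γ I X₀ : Type*} [Group Γ] [MulAction Γ I]
    [MeasurableSpace X₀]
    (μ₀ : Measure X₀) [IsProbabilityMeasure μ₀]
    (μ : Measure (I → X₀))
    (hμ : ∀ (s : Finset I) (f : I → Set X₀), (∀ i, MeasurableSet (f i)) →
      μ {x : I → X₀ | ∀ i ∈ s, x i ∈ f i} = ∏ i ∈ s, μ₀ (f i))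
    (horb : ∀ i : I, (MulAction.orbit Γ i).Infinite)
    (V : Submodule ℂ (Lp ℂ 2 μ)) (hV : FiniteDimensional ℂ V)
    (hinvV : ∀ g : Γ, ∀ f ∈ V, ∃ f' ∈ V,
      (f' : (I → X₀) → ℂ) =ᵐ[μ] fun x : I → X₀ => f (fun i : I => x (g⁻¹ • i))) :
    ∀ f ∈ V, ∃ c : ℂ, (f : (I → X₀) → ℂ) =ᵐ[μ] fun _ => c := by
  obtain rfl : μ = Measure.infinitePi fun _ => μ₀ := Measure.eq_infinitePi _ hμ
  obtain ⟨l, hl, hdisj⟩ := MulAction.exists_neBot_eventually_disjoint_smul horb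
  have hVinv : ∀ g, ∀ f ∈ V, bernoulliKoopman μ₀ g f ∈ V := fun g f hf => by
    obtain ⟨f', hf', hf'f⟩ := hinvV g f hf
    convert hf'
    refine Lp.ext ((coeFn_bernoulliKoopman μ₀ g f).trans (EventuallyEq.trans ?_ hf'f.symm))
    exact Eventually.of_forall fun x => congrArg f (funext (bernoulliShift_apply g x))
  have hone : ‖Lp.const 2 (Measure.infinitePi fun _ : I => μ₀) (1 : ℂ)‖ = 1 := by
    simp [Lp.norm_const']
  have hVconst := le_span_singleton_of_tendsto_inner (l := l) (bernoulliKoopman μ₀) hone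
    (fun g => bernoulliKoopman_const μ₀ g 1) (tendsto_inner_bernoulliKoopman μ₀ hdisj) hVinv
  intro f hf
  obtain ⟨c, hc⟩ := Submodule.mem_span_singleton.mp (hVconst hf)
  refine ⟨c, ?_⟩
  filter_upwards [hc ▸ Lp.coeFn_smul c (Lp.const 2 _ (1 : ℂ))] with x hx
  simp [hx]

/-- The generalized Bernoulli action of a countable group `Γ` on `X₀^I`, where `Γ` acts on
the countable set `I` with infinite orbits, is weakly mixing with respect to the product
probability measure `μ = μ₀^{⊗ I}` (characterized by its values on measurable cylinder
sets): every finite-dimensional subspace `V` of `L²(X₀^I, μ)` that is invariant under all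
the Koopman operators `f ↦ f ∘ T_g`, `T_g x = fun i => x (g⁻¹ • i)`, consists of
`μ`-almost everywhere constant functions. -/
theorem stmt4 {Γ I X₀ : Type*} [Group Γ] [MulAction Γ I] [Countable Γ] [Countable I]
    [MeasurableSpace X₀] [StandardBorelSpace X₀]
    (μ₀ : Measure X₀) [IsProbabilityMeasure μ₀]
    (μ : Measure (I → X₀)) [IsProbabilityMeasure μ]
    (hμ : ∀ (s : Finset I) (f : I → Set X₀), (∀ i, MeasurableSet (f i)) →
      μ {x : I → X₀ | ∀ i ∈ s, x i ∈ f i} = ∏ i ∈ s, μ₀ (f i))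
    (horb : ∀ i : I, (MulAction.orbit Γ i).Infinite)
    (V : Submodule ℂ (Lp ℂ 2 μ)) (hV : FiniteDimensional ℂ V)
    (hinvV : ∀ g : Γ, ∀ f ∈ V, ∃ f' ∈ V,
      (f' : (I → X₀) → ℂ) =ᵐ[μ] fun x : I → X₀ => f (fun i : I => x (g⁻¹ • i))) :
    ∀ f ∈ V, ∃ c : ℂ, (f : (I → X₀) → ℂ) =ᵐ[μ] fun _ => c :=
  stmt4_general μ₀ μ hμ horb V hV hinvV
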